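/- arXiv:1612.02107 — 3 statements merged into one kernel-verified Lean document; each statement's English description precedes it below -/
import Mathlib

section
/- Let S₀ = H and Sₙ = {g ∈ G | g ψ s for some s ∈ Sₙ₋₁} for n ≥ 1, and S = ⋃ₙ Sₙ. Then S equals the normal closure of H in G. -/
/-- The left coset `aH` as a set. -/
def leftCoset' {G : Type*} [Group G] (H : Subgroup G) (a : G) : Set G :=
  {g : G | ∃ h ∈ H, g = a * h}

/-- The block `xHyH` induced by `H`. -/
def block {G : Type*} [Group G] (H : Subgroup G) (x y : G) : Set G :=
  {g : G | ∃ h₁ ∈ H, ∃ h₂ ∈ H, g = x * h₁ * y * h₂}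

/-- `a ψ b` iff `a` and `b` lie in a common block induced by `H`. -/
def psi {G : Type*} [Group G] (H : Subgroup G) (a b : G) : Prop :=
  ∃ x y : G, a ∈ block H x y ∧ b ∈ block H x y

/-- The sequence `S₀ = H`, `Sₙ₊₁ = {g | g ψ s for some s ∈ Sₙ}`. -/
def Sseq {G : Type*} [Group G] (H : Subgroup G) : ℕ → Set G
  | 0 => (H : Set G)
  | n + 1 => {g : G | ∃ s ∈ Sseq H n, psi H g s}

lemma Sseq_step {G : Type*} [Group G] (H : Subgroup G) {n : ℕ} {a h k h' : G} (y : G)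
    (ha : a ∈ Sseq H n) (hh : h ∈ H) (hk : k ∈ H) (hh' : h' ∈ H) :
    a * h * (y * k * y⁻¹) * h' ∈ Sseq H (n + 1) :=
  ⟨a, ha, a * h * y, y⁻¹,
    ⟨k, hk, h', hh', by group⟩,
    ⟨1, one_mem _, h⁻¹, inv_mem hh, by group⟩⟩

lemma Sseq_mul {G : Type*} [Group G] (H : Subgroup G) :
    ∀ (n : ℕ) {m : ℕ} {a b : G}, a ∈ Sseq H m → b ∈ Sseq H n →
      a * b ∈ Sseq H (m + n + 1)
  | 0, m, a, b, ha, hb => by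
      have := Sseq_step H (1 : G) ha hb (one_mem H) (one_mem H)
      simpa using this
  | n + 1, m, a, b, ha, hb => by
      obtain ⟨s, hs, x, y, ⟨h₁, m₁, h₂, m₂, eb⟩, ⟨h₃, m₃, h₄, m₄, es⟩⟩ := hb
      have ih := Sseq_mul H n ha hs
      exact ⟨a * s, ih, a * x, y,
        ⟨h₁, m₁, h₂, m₂, by rw [eb]; group⟩,
        ⟨h₃, m₃, h₄, m₄, by rw [es]; group⟩⟩

lemma Sseq_inv {G : Type*} [Group G] (H : Subgroup G) :
    ∀ (n : ℕ) {a : G}, a ∈ Sseq H n → ∃ m, a⁻¹ ∈ Sseq H m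
  | 0, a, ha => ⟨0, inv_mem ha⟩
  | n + 1, a, ha => by
      obtain ⟨s, hs, x, y, ⟨h₁, m₁, h₂, m₂, ea⟩, ⟨h₃, m₃, h₄, m₄, es⟩⟩ := ha
      obtain ⟨m, hm⟩ := Sseq_inv H n hs
      -- a⁻¹ = (h₂⁻¹*h₄) * ((h₄⁻¹*y⁻¹) * (h₁⁻¹*h₃) * (h₄⁻¹*y⁻¹)⁻¹) * 1 * s⁻¹
      have h0 : (1 : G) ∈ Sseq H 0 := one_mem H
      have step := Sseq_step H (h₄⁻¹ * y⁻¹) h0 (mul_mem (inv_mem m₂) m₄)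
        (mul_mem (inv_mem m₁) m₃) (one_mem H)
      have prod := Sseq_mul H m step hm
      refine ⟨0 + 1 + m + 1, ?_⟩
      have : (1 * (h₂⁻¹ * h₄) * (h₄⁻¹ * y⁻¹ * (h₁⁻¹ * h₃) * (h₄⁻¹ * y⁻¹)⁻¹) * 1) * s⁻¹
          = a⁻¹ := by
        rw [ea, es]; group
      rwa [this] at prod

lemma Sseq_subset_normalClosure {G : Type*} [Group G] (H : Subgroup G) :
    ∀ n : ℕ, Sseq H n ⊆ (Subgroup.normalClosure (H : Set G) : Set G)
  | 0 => fun g hg => Subgroup.subset_normalClosure hg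
  | n + 1 => by
      rintro g ⟨s, hs, x, y, ⟨h₁, m₁, h₂, m₂, eg⟩, ⟨h₃, m₃, h₄, m₄, es⟩⟩
      have hsN : s ∈ Subgroup.normalClosure (H : Set G) :=
        Sseq_subset_normalClosure H n hs
      have hN : ∀ (z w : G), w ∈ H → z * w * z⁻¹ ∈ Subgroup.normalClosure (H : Set G) :=
        fun z w hw => Subgroup.normalClosure_normal.conj_mem w
          (Subgroup.subset_normalClosure hw) z
      have key : g = (x * h₁ * x⁻¹) * ((x * y) * (h₂ * h₄⁻¹) * (x * y)⁻¹) *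
          (x * h₃⁻¹ * x⁻¹) * s := by
        rw [eg, es]; group
      rw [key]
      exact mul_mem (mul_mem (mul_mem (hN x h₁ m₁)
        (hN (x * y) _ (mul_mem m₂ (inv_mem m₄)))) (hN x _ (inv_mem m₃))) hsN

theorem stmt_9 {G : Type*} [Group G] (H : Subgroup G) :
    (⋃ n : ℕ, Sseq H n) = (Subgroup.normalClosure (H : Set G) : Set G) := by
  apply Set.Subset.antisymm
  · exact Set.iUnion_subset (Sseq_subset_normalClosure H)
  · intro g hg
    simp only [Set.mem_iUnion]
    refine Subgroup.closure_induction (k := Group.conjugatesOfSet (H : Set G))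
      (p := fun g _ => ∃ n, g ∈ Sseq H n) ?_ ⟨0, one_mem H⟩ ?_ ?_ hg
    · intro x hx
      obtain ⟨b, hb, hconj⟩ := Group.mem_conjugatesOfSet_iff.1 hx
      obtain ⟨c, rfl⟩ := isConj_iff.1 hconj
      refine ⟨1, ?_⟩
      have h0 : (1 : G) ∈ Sseq H 0 := one_mem H
      have := Sseq_step H c h0 (one_mem H) hb (one_mem H)
      simpa using this
    · rintro x y _ _ ⟨m, hm⟩ ⟨n, hn⟩
      exact ⟨m + n + 1, Sseq_mul H n hm hn⟩
    · rintro x _ ⟨n, hn⟩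
      exact Sseq_inv H n hn
end

section
/- The transitive closure of the relation ψ on G is exactly the relation 'lying in the same left coset of the normal closure of H'; i.e., for g₁, g₂ ∈ G, g₁ and g₂ are related by the equivalence relation generated by ψ iff g₁⁻¹*g₂ lies in the normal closure of H. -/
lemma psi_left {G : Type*} [Group G] (H : Subgroup G) {a b : G} (z : G) (h : psi H a b) :
    psi H (z * a) (z * b) := by
  obtain ⟨x, y, ⟨h1, hh1, h2, hh2, rfl⟩, ⟨h3, hh3, h4, hh4, rfl⟩⟩ := h
  exact ⟨z * x, y, ⟨h1, hh1, h2, hh2, by group⟩, ⟨h3, hh3, h4, hh4, by group⟩⟩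

lemma eqvGen_left {G : Type*} [Group G] (H : Subgroup G) {a b : G} (z : G)
    (h : Relation.EqvGen (psi H) a b) : Relation.EqvGen (psi H) (z * a) (z * b) := by
  induction h with
  | rel a b hab => exact Relation.EqvGen.rel _ _ (psi_left H z hab)
  | refl a => exact Relation.EqvGen.refl _
  | symm a b _ ih => exact Relation.EqvGen.symm _ _ ih
  | trans a b c _ _ ih1 ih2 => exact Relation.EqvGen.trans _ _ _ ih1 ih2

theorem stmt_10 {G : Type*} [Group G] (H : Subgroup G) (g₁ g₂ : G) :
    Relation.EqvGen (psi H) g₁ g₂ ↔ g₁⁻¹ * g₂ ∈ Subgroup.normalClosure (H : Set G) := by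
  constructor
  · intro h
    induction h with
    | rel a b hab =>
      obtain ⟨x, y, ⟨h1, hh1, h2, hh2, rfl⟩, ⟨h3, hh3, h4, hh4, rfl⟩⟩ := hab
      have hN : ∀ h ∈ H, h ∈ Subgroup.normalClosure (H : Set G) := fun h hh =>
        Subgroup.subset_normalClosure hh
      have e : (x * h1 * y * h2)⁻¹ * (x * h3 * y * h4)
          = h2⁻¹ * (y⁻¹ * (h1⁻¹ * h3) * y) * h4 := by group
      rw [e]
      exact mul_mem (mul_mem (inv_mem (hN _ hh2))
        ((Subgroup.normalClosure_normal).conj_mem' _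
          (hN _ (mul_mem (inv_mem hh1) hh3)) y)) (hN _ hh4)
    | refl a => simpa using one_mem _
    | symm a b _ ih => simpa [mul_inv_rev] using inv_mem ih
    | trans a b c _ _ ih1 ih2 =>
      have e : a⁻¹ * c = (a⁻¹ * b) * (b⁻¹ * c) := by group
      rw [e]; exact mul_mem ih1 ih2
  · intro h
    have key : ∀ g ∈ Subgroup.normalClosure (H : Set G), Relation.EqvGen (psi H) 1 g := by
      intro g hg
      refine Subgroup.closure_induction ?_ ?_ ?_ ?_ hg
      · intro x hx
        obtain ⟨c, hc, hconj⟩ := Group.mem_conjugatesOfSet_iff.mp hx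
        obtain ⟨u, hu⟩ := isConj_iff.mp hconj
        have hx' : x = u * c * u⁻¹ := hu.symm
        refine Relation.EqvGen.rel _ _ ⟨u, u⁻¹, ⟨1, one_mem _, 1, one_mem _, by group⟩,
          ⟨c, hc, 1, one_mem _, by rw [hx']; group⟩⟩
      · exact Relation.EqvGen.refl _
      · intro a b _ _ iha ihb
        refine Relation.EqvGen.trans _ _ _ iha ?_
        have := eqvGen_left H a ihb
        simpa using this
      · intro a _ iha
        have := eqvGen_left H a⁻¹ iha
        simp at this
        exact Relation.EqvGen.symm _ _ this
    have := eqvGen_left H g₁ (key _ h)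
    simpa using this
end

section
/- Suppose the relation ρ on blocks induced by H (B₁ ρ B₂ iff B₁ ∩ B₂ ≠ ∅) is transitive. Then the union of all blocks B with B ∩ H ≠ ∅ equals the normal closure of H in G. -/
/-- The union of all blocks meeting `H`. -/
def blockUnion {G : Type*} [Group G] (H : Subgroup G) : Set G :=
  {g : G | ∃ x y : G, g ∈ block H x y ∧ (block H x y ∩ (H : Set G)).Nonempty}

lemma one_mem_blockUnion {G : Type*} [Group G] (H : Subgroup G) :
    (1 : G) ∈ blockUnion H :=
  ⟨1, 1, ⟨1, H.one_mem, 1, H.one_mem, by group⟩,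
    ⟨1, ⟨1, H.one_mem, 1, H.one_mem, by group⟩, H.one_mem⟩⟩

lemma inv_mem_blockUnion {G : Type*} [Group G] (H : Subgroup G) {a : G}
    (ha : a ∈ blockUnion H) : a⁻¹ ∈ blockUnion H := by
  obtain ⟨x, y, ⟨p1, hp1, p2, hp2, rfl⟩, w, ⟨⟨w1, hw1, w2, hw2, rfl⟩, hwH⟩⟩ := ha
  refine ⟨p2⁻¹ * w2 * (x * w1 * y * w2)⁻¹ * x, x⁻¹,
    ⟨w1 * p1⁻¹, H.mul_mem hw1 (H.inv_mem hp1), 1, H.one_mem, by group⟩,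
    ⟨p2⁻¹ * w2 * (x * w1 * y * w2)⁻¹,
      ⟨1, H.one_mem, 1, H.one_mem, by group⟩,
      H.mul_mem (H.mul_mem (H.inv_mem hp2) hw2) (H.inv_mem hwH)⟩⟩

lemma mul_mem_blockUnion {G : Type*} [Group G] (H : Subgroup G)
    (htrans : ∀ x₁ y₁ x₂ y₂ x₃ y₃ : G,
      (block H x₁ y₁ ∩ block H x₂ y₂).Nonempty →
      (block H x₂ y₂ ∩ block H x₃ y₃).Nonempty →
      (block H x₁ y₁ ∩ block H x₃ y₃).Nonempty)
    {a b : G} (ha : a ∈ blockUnion H) (hb : b ∈ blockUnion H) :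
    a * b ∈ blockUnion H := by
  obtain ⟨x, y, ⟨p1, hp1, p2, hp2, rfl⟩, w, ⟨⟨w1, hw1, w2, hw2, rfl⟩, hwH⟩⟩ := ha
  obtain ⟨u, v, ⟨q1, hq1, q2, hq2, rfl⟩, w', ⟨⟨t1, ht1, t2, ht2, rfl⟩, hw'H⟩⟩ := hb
  refine ⟨x, y * p2 * u * q1 * v, ⟨p1, hp1, q2, hq2, by group⟩, ?_⟩
  have h1 : (block H x (y * p2 * u * q1 * v) ∩
      block H ((x * w1 * y * w2) * w2⁻¹ * p2 * u) v).Nonempty :=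
    ⟨x * w1 * (y * p2 * u * q1 * v) * 1,
      ⟨w1, hw1, 1, H.one_mem, rfl⟩, ⟨q1, hq1, 1, H.one_mem, by group⟩⟩
  have h2 : (block H ((x * w1 * y * w2) * w2⁻¹ * p2 * u) v ∩ block H 1 1).Nonempty :=
    ⟨(x * w1 * y * w2) * w2⁻¹ * p2 * u * t1 * v * t2,
      ⟨t1, ht1, t2, ht2, by group⟩,
      ⟨(x * w1 * y * w2) * w2⁻¹ * p2,
        H.mul_mem (H.mul_mem hwH (H.inv_mem hw2)) hp2,
        u * t1 * v * t2, hw'H, by group⟩⟩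
  obtain ⟨z, hz1, e1, he1, e2, he2, rfl⟩ := htrans _ _ _ _ 1 1 h1 h2
  exact ⟨_, hz1, show (1 : G) * e1 * 1 * e2 ∈ H by simpa using H.mul_mem he1 he2⟩

theorem stmt_15 {G : Type*} [Group G] (H : Subgroup G)
    (htrans : ∀ x₁ y₁ x₂ y₂ x₃ y₃ : G,
      (block H x₁ y₁ ∩ block H x₂ y₂).Nonempty →
      (block H x₂ y₂ ∩ block H x₃ y₃).Nonempty →
      (block H x₁ y₁ ∩ block H x₃ y₃).Nonempty) :
    {g : G | ∃ x y : G, g ∈ block H x y ∧ (block H x y ∩ (H : Set G)).Nonempty} =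
      (Subgroup.normalClosure (H : Set G) : Set G) := by
  apply Set.Subset.antisymm
  · rintro g ⟨x, y, ⟨a, ha, b, hb, rfl⟩, s, ⟨⟨c, hc, d, hd, rfl⟩, hsH⟩⟩
    have hN : (H : Set G) ⊆ (Subgroup.normalClosure (H : Set G) : Set G) :=
      Subgroup.subset_normalClosure
    have key : x * a * y * b =
        (x * (a * c⁻¹) * x⁻¹) * (x * c * y * d) * (d⁻¹ * b) := by group
    show x * a * y * b ∈ Subgroup.normalClosure (H : Set G)
    rw [key]
    exact mul_mem
      (mul_mem
        (Subgroup.Normal.conj_mem inferInstance _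
          (hN (H.mul_mem ha (H.inv_mem hc))) x)
        (hN hsH))
      (mul_mem (inv_mem (hN hd)) (hN hb))
  · let K : Subgroup G :=
      { carrier := blockUnion H
        one_mem' := one_mem_blockUnion H
        mul_mem' := fun hx hy => mul_mem_blockUnion H htrans hx hy
        inv_mem' := fun hx => inv_mem_blockUnion H hx }
    have hle : Subgroup.normalClosure (H : Set G) ≤ K := by
      rw [Subgroup.normalClosure]
      refine (Subgroup.closure_le K).mpr ?_
      intro c hc
      obtain ⟨h, hh, hconj⟩ := Group.mem_conjugatesOfSet_iff.mp hc
      obtain ⟨u, rfl⟩ := isConj_iff.mp hconj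
      exact ⟨u, u⁻¹, ⟨h, hh, 1, H.one_mem, by group⟩,
        ⟨1, ⟨1, H.one_mem, 1, H.one_mem, by group⟩, H.one_mem⟩⟩
    exact fun g hg => hle hg
end
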